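/- For i, j > 0 and f ∈ NSym: F^⊥_{(i)}(f·e_j) = F^⊥_{(i)}(f)·e_j + F^⊥_{(i−1)}(f)·e_{j−1}, and F^⊥_{(1^i)}(f·e_j) = ∑_{k=0}^{min(i,j)} F^⊥_{(1^{i−k})}(f)·e_{j−k}. In particular F^⊥_{(1^i)}(e_j) equals e_{j−i} if i ≤ j and 0 if i > j, while F^⊥_{(i)}(e_j) equals e_{j−1} if i = 1, e_j if i = 0, and 0 if i > 1. -/

import Mathlib

open scoped Classical

/-- `NSym`, modeled as the monoid algebra on words in the complete homogeneous
generators `h_n` (`n ≥ 1`): the word `(α₁,…,α_k)` is the basis element `h_α`. -/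
abbrev NSymH := MonoidAlgebra ℚ (FreeMonoid ℕ+)

/-- The basis element `h_α` for a list `α` (parts `0` contribute `h₀ = 1`). -/
noncomputable def hW (l : List ℕ) : NSymH :=
  MonoidAlgebra.single
    (FreeMonoid.ofList (l.filterMap fun m => if h : 0 < m then some (⟨m, h⟩ : ℕ+) else none)) 1

/-- The elementary noncommutative symmetric function `e_n = ∑_{α⊨n} (−1)^{n−ℓ(α)} h_α`. -/
noncomputable def eN (n : ℕ) : NSymH :=
  ∑ α : Composition n, ((-1 : ℚ) ^ (n - α.length)) • hW α.blocks

/-- The exponent vector of the monomial `x_0^{w₁} x_1^{w₂} ⋯` attached to a word `w`;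
the coefficient of this monomial in `f ∈ QSym` is `⟨h_w, f⟩`. -/
noncomputable def monomialOfW (w : FreeMonoid ℕ+) : ℕ →₀ ℕ :=
  ∑ j : Fin (FreeMonoid.toList w).length,
    Finsupp.single (j : ℕ) (((FreeMonoid.toList w).get j : ℕ+) : ℕ)

/-- The duality pairing `⟨g, f⟩` of `g ∈ NSym` with a quasisymmetric power series `f`,
determined by `⟨h_α, M_β⟩ = δ_{αβ}` (equivalently `⟨R_α, F_β⟩ = δ_{αβ}`). -/
noncomputable def pairPF (g : NSymH) (f : MvPowerSeries ℕ ℚ) : ℚ :=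
  Finsupp.sum g.coeff fun w c => c * MvPowerSeries.coeff (monomialOfW w) f

/-- `e_α` as a product of the letters of a word. -/
noncomputable def eWord (w : FreeMonoid ℕ+) : NSymH :=
  ((FreeMonoid.toList w).map fun p => eN (p : ℕ)).prod

/-- The involution `ψ` of `NSym`, the linear map with `ψ(h_α) = e_α`
(equivalently `ψ(R_α) = R_{αᶜ}`). -/
noncomputable def psiN : NSymH →ₗ[ℚ] NSymH :=
  (Finsupp.lsum ℚ fun w => LinearMap.toSpanSingleton ℚ NSymH (eWord w)) ∘ₗ
    (MonoidAlgebra.coeffLinearEquiv ℚ).toLinearMap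
/-- The set of partial sums associated to a composition. -/
def compSet {n : ℕ} (α : Composition n) : Finset ℕ :=
  (Finset.Icc 1 (α.length - 1)).image fun k => (α.blocks.take k).sum

/-- The fundamental quasisymmetric function `F_α`. -/
noncomputable def Ffun {n : ℕ} (α : Composition n) : MvPowerSeries ℕ ℚ :=
  fun d => if ∃ i : ℕ → ℕ, (∀ a b, a ≤ b → b < n → i a ≤ i b) ∧
      (∀ j, j + 1 < n → i j = i (j + 1) → (j + 1) ∉ compSet α) ∧
      d = ∑ j ∈ Finset.range n, Finsupp.single (i j) 1 then (1 : ℚ) else 0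

/-- The monomial quasisymmetric function `M_α`. -/
noncomputable def Mfun {n : ℕ} (α : Composition n) : MvPowerSeries ℕ ℚ :=
  fun d => if ∃ f : Fin α.length → ℕ, StrictMono f ∧
      d = ∑ j, Finsupp.single (f j) (α.blocks.get j) then (1 : ℚ) else 0

/-- Encoding of the subset of `{1,…,n-1}` corresponding to a composition. -/
def toFinsetC {n : ℕ} (α : Composition n) : Finset (Fin (n - 1)) :=
  compositionAsSetEquiv n (compositionEquiv n α)

/-- The composition of `n` corresponding to a subset of `{1,…,n-1}`. -/
def ofFinsetC (n : ℕ) (S : Finset (Fin (n - 1))) : Composition n :=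
  (compositionEquiv n).symm ((compositionAsSetEquiv n).symm S)

/-- The complement composition `αᶜ = comp(set(α)ᶜ)`. -/
def complC {n : ℕ} (α : Composition n) : Composition n :=
  ofFinsetC n (toFinsetC α)ᶜ

/-- The fundamental quasisymmetric function `F_{(1^k)}` of the column composition. -/
noncomputable def Fcol (k : ℕ) : MvPowerSeries ℕ ℚ := Ffun (Composition.ones k)

/-- The fundamental quasisymmetric function `F_{(k)}` of the one-row composition
(`F_∅ = 1` for `k = 0`). -/
noncomputable def Frow (k : ℕ) : MvPowerSeries ℕ ℚ :=
  if h : 0 < k then Ffun (Composition.single k h) else 1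

/-!
Everything is first computed for right multiplication by `h_k`. Pairing `h_w` with a power series
reads off the coefficient of `x_0^{w_1} x_1^{w_2} ⋯`, so the adjoint of right multiplication by
`h_r` extracts the coefficients whose last variable carries exponent `r`. On a product this
splits the exponent between the two factors, and on a fundamental function `F_γ` it gives `0` or
`F` of `γ` truncated; in particular it sends `F_{(i)}` to `F_{(i-r)}`, and `F_{(1^i)}` to
`F_{(1^{i-r})}` for `r ≤ 1` and to `0` otherwise. Since the `F_γ` separate points of `NSym`, this
gives `F^⊥_{(i)}(f h_k) = ∑_t F^⊥_{(i-t)}(f) h_{k-t}` and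
`F^⊥_{(1^i)}(f h_k) = F^⊥_{(1^i)}(f) h_k + F^⊥_{(1^{i-1})}(f) h_{k-1}`.

The rules for `e` then follow formally from `e_{n+1} = ∑_{a+b=n} (-1)^a h_{a+1} e_b` by strong
induction on `n`: written recursively as `D_{i+1}(f x_{k+1}) = D_{i+1}(f) x_{k+1} + D_i(f x_k)`,
the summed rule for `h` becomes the two-term rule for `e`, and the two-term rule for `h` becomes
the recursive, hence the summed, rule for `e`.
-/

namespace NSymPerp

open Finset

/-! ### From rules for `h` to rules for `e` -/

section Transfer

variable {A : Type*} [Ring A]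

structure IsElementaryOf (h e : ℕ → A) : Prop where
  h_zero : h 0 = 1
  e_zero : e 0 = 1
  e_succ : ∀ n, e (n + 1) = ∑ p ∈ antidiagonal n, (-1 : ℤ) ^ p.1 • (h (p.1 + 1) * e p.2)

lemma IsElementaryOf.mul_e_succ {h e : ℕ → A} (he : IsElementaryOf h e) (g : A) (n : ℕ) :
    g * e (n + 1) = ∑ p ∈ antidiagonal n, (-1 : ℤ) ^ p.1 • (g * h (p.1 + 1) * e p.2) := by
  simp only [he.e_succ, mul_sum, mul_smul_comm, mul_assoc]

lemma IsElementaryOf.sum_alternating_eq_zero {h e : ℕ → A} (he : IsElementaryOf h e) (n : ℕ) :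
    ∑ p ∈ antidiagonal (n + 1), (-1 : ℤ) ^ p.1 • (h p.1 * e p.2) = 0 := by
  rw [Finset.Nat.sum_antidiagonal_succ, he.h_zero, one_mul, pow_zero, one_smul,
    he.e_succ n, ← sum_add_distrib]
  refine sum_eq_zero fun p _ => ?_
  rw [pow_succ, mul_neg_one, neg_smul, add_neg_cancel]

lemma sum_antidiagonal_succ_of_apply_zero {M : Type*} [AddCommGroup M] (R : ℕ → ℕ → M)
    (hR : ∀ a, R a 0 = 0) (n : ℕ) :
    ∑ p ∈ antidiagonal (n + 1), (-1 : ℤ) ^ p.1 • R p.1 p.2 =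
      ∑ p ∈ antidiagonal n, (-1 : ℤ) ^ p.1 • R p.1 (p.2 + 1) := by
  rw [Finset.Nat.sum_antidiagonal_succ', hR, smul_zero, zero_add]

variable {F : Type*} [FunLike F A A]

/- For `x = h`, `SumRule` for `D i = F^⊥_{(i)}` and `TwoTermRule` for `D i = F^⊥_{(1^i)}` are
Lemma 2.6 of Berg et al.; for `x = e` the two rules trade places, which is the theorem. -/
def SumRule (D : ℕ → F) (x : ℕ → A) : Prop :=
  ∀ i k f, D i (f * x k) = ∑ t ∈ range (min i k + 1), D (i - t) f * x (k - t)

def ShiftRule (D : ℕ → F) (x : ℕ → A) : Prop :=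
  ∀ i k f, D (i + 1) (f * x (k + 1)) = D (i + 1) f * x (k + 1) + D i (f * x k)

def TwoTermRule (D : ℕ → F) (x : ℕ → A) : Prop :=
  ∀ i k f, D (i + 1) (f * x (k + 1)) = D (i + 1) f * x (k + 1) + D i f * x k

variable {D : ℕ → F} {x h e : ℕ → A}

lemma SumRule.shiftRule (hD : SumRule D x) : ShiftRule D x := by
  intro i k f
  rw [hD, hD, show min (i + 1) (k + 1) + 1 = min i k + 1 + 1 by omega, sum_range_succ',
    add_comm]
  simp

lemma ShiftRule.sumRule (hD : ShiftRule D x) (hD0 : ∀ f, D 0 f = f) (hx0 : x 0 = 1) :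
    SumRule D x := by
  intro i
  induction i with
  | zero => simp [hD0]
  | succ i ih =>
    rintro (_ | k) f
    · simp [hx0]
    · rw [hD, ih, show min (i + 1) (k + 1) + 1 = min i k + 1 + 1 by omega,
        sum_range_succ' _ (min i k + 1), add_comm]
      simp

lemma SumRule.map_eq (hD : SumRule D x) (hD0 : ∀ f, D 0 f = f) (hD1 : ∀ k, D (k + 1) 1 = 0)
    (i j : ℕ) : D i (x j) = if i ≤ j then x (j - i) else 0 := by
  have hvanish : ∀ t ∈ range (min i j + 1), t ≠ i → D (i - t) 1 * x (j - t) = 0 :=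
    fun t ht hti => by
      obtain ⟨k, hk⟩ : ∃ k, i - t = k + 1 := ⟨i - t - 1, by simp at ht; omega⟩
      rw [hk, hD1, zero_mul]
  rw [← one_mul (x j), hD]
  split_ifs with hij
  · rw [sum_eq_single_of_mem i (by simp; omega) hvanish, Nat.sub_self, hD0, one_mul]
  · exact sum_eq_zero fun t ht => hvanish t ht (by simp at ht; omega)

lemma TwoTermRule.map_eq (hD : TwoTermRule D x) (hD0 : ∀ f, D 0 f = f)
    (hD1 : ∀ k, D (k + 1) 1 = 0) (i j : ℕ) :
    D (i + 1) (x (j + 1)) = if i = 0 then x j else 0 := by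
  rw [← one_mul (x (j + 1)), hD, hD1, zero_mul, zero_add]
  rcases i with _ | i
  · rw [hD0, one_mul, if_pos rfl]
  · rw [hD1, zero_mul, if_neg (Nat.succ_ne_zero i)]

def defect (D' : F) (g y : A) : A := D' (g * y) - D' g * y

lemma defect_e_zero (he : IsElementaryOf h e) (D' : F) (g : A) : defect D' g (e 0) = 0 := by
  simp [defect, he.e_zero]

variable [AddMonoidHomClass F A A]

lemma IsElementaryOf.map_mul_e_succ (he : IsElementaryOf h e) (D' : F) (n : ℕ) (f : A) :
    D' (f * e (n + 1)) = D' f * e (n + 1) +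
      ∑ p ∈ antidiagonal n, (-1 : ℤ) ^ p.1 •
        (defect D' f (h (p.1 + 1)) * e p.2 + defect D' (f * h (p.1 + 1)) (e p.2)) := by
  rw [he.mul_e_succ, he.mul_e_succ, map_sum, ← sum_add_distrib]
  refine sum_congr rfl fun p _ => ?_
  rw [map_zsmul, ← smul_add, defect, defect]
  congr 1
  noncomm_ring

theorem IsElementaryOf.twoTermRule (he : IsElementaryOf h e) (hD : ShiftRule D h) :
    TwoTermRule D e := by
  intro i n
  induction n using Nat.strong_induction_on with
  | _ n ih =>
  intro f
  have hh : ∀ a, defect (D (i + 1)) f (h (a + 1)) = D i (f * h a) := fun a => by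
    rw [defect, hD, add_sub_cancel_left]
  rw [he.map_mul_e_succ, add_right_inj]
  simp only [hh]
  rcases n with _ | n
  · simp [defect, he.e_zero, he.h_zero]
  · have hih : ∀ p ∈ antidiagonal n,
        defect (D (i + 1)) (f * h (p.1 + 1)) (e (p.2 + 1)) = D i (f * h (p.1 + 1)) * e p.2 :=
      fun p hp => by
        rw [defect, ih p.2 (Finset.Nat.antidiagonal.snd_lt hp), add_sub_cancel_left]
    rw [sum_congr rfl fun p _ => smul_add _ _ _, sum_add_distrib,
      sum_antidiagonal_succ_of_apply_zero (fun a b => defect (D (i + 1)) (f * h (a + 1)) (e b))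
        fun a => defect_e_zero he _ _, Finset.Nat.sum_antidiagonal_succ, add_assoc,
      ← sum_add_distrib, sum_eq_zero fun p hp => ?_]
    · simp [he.h_zero]
    · rw [hih p hp, pow_succ, mul_neg_one, neg_smul, neg_add_cancel]

theorem IsElementaryOf.shiftRule (he : IsElementaryOf h e) (hD : TwoTermRule D h) :
    ShiftRule D e := by
  intro i n
  induction n using Nat.strong_induction_on with
  | _ n ih =>
  intro f
  have hh : ∀ a, defect (D (i + 1)) f (h (a + 1)) = D i f * h a := fun a => by
    rw [defect, hD, add_sub_cancel_left]
  rw [he.map_mul_e_succ, add_right_inj]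
  simp only [hh]
  rcases n with _ | n
  · simp [defect, he.e_zero, he.h_zero]
  · have hsum : ∑ p ∈ antidiagonal (n + 1), (-1 : ℤ) ^ p.1 • (D i f * h p.1 * e p.2) = 0 := by
      rw [← mul_zero (D i f), ← he.sum_alternating_eq_zero n, mul_sum]
      exact sum_congr rfl fun p _ => by rw [mul_smul_comm, mul_assoc]
    have hih : ∀ p ∈ antidiagonal n,
        defect (D (i + 1)) (f * h (p.1 + 1)) (e (p.2 + 1)) = D i (f * h (p.1 + 1) * e p.2) :=
      fun p hp => by
        rw [defect, ih p.2 (Finset.Nat.antidiagonal.snd_lt hp), add_sub_cancel_left]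
    rw [sum_congr rfl fun p _ => smul_add _ _ _, sum_add_distrib, hsum, zero_add,
      sum_antidiagonal_succ_of_apply_zero (fun a b => defect (D (i + 1)) (f * h (a + 1)) (e b))
        fun a => defect_e_zero he _ _, he.mul_e_succ, map_sum]
    exact sum_congr rfl fun p hp => by rw [hih p hp, map_zsmul]

end Transfer

/-! ### Coefficients of the fundamental quasisymmetric functions -/

def prefixSum (d : ℕ →₀ ℕ) (v : ℕ) : ℕ := ∑ u ∈ range v, d u

@[simp] lemma prefixSum_zero (d : ℕ →₀ ℕ) : prefixSum d 0 = 0 := rfl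

lemma prefixSum_succ (d : ℕ →₀ ℕ) (v : ℕ) : prefixSum d (v + 1) = prefixSum d v + d v :=
  sum_range_succ _ _

lemma prefixSum_mono (d : ℕ →₀ ℕ) : Monotone (prefixSum d) :=
  fun _ _ h => sum_le_sum_of_subset (range_subset_range.mpr h)

lemma prefixSum_eq_degree {d : ℕ →₀ ℕ} {v : ℕ} (h : ∀ x ∈ d.support, x < v) :
    prefixSum d v = d.degree :=
  (sum_subset (fun x hx => mem_range.mpr (h x hx))
    (fun _ _ hx => Finsupp.notMem_support_iff.mp hx)).symm

lemma lt_sup_support_succ {d : ℕ →₀ ℕ} {x : ℕ} (hx : x ∈ d.support) :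
    x < d.support.sup id + 1 :=
  Nat.lt_succ_of_le (le_sup (f := id) hx)

lemma prefixSum_le_degree (d : ℕ →₀ ℕ) (v : ℕ) : prefixSum d v ≤ d.degree :=
  (prefixSum_mono d (le_max_left v _)).trans_eq
    (prefixSum_eq_degree fun _ hx => (lt_sup_support_succ hx).trans_le (le_max_right _ _))

lemma prefixSum_sum_single (i : ℕ → ℕ) (m v : ℕ) :
    prefixSum (∑ j ∈ range m, Finsupp.single (i j) 1) v = #{j ∈ range m | i j < v} := by
  simp only [prefixSum, Finsupp.finsetSum_apply, Finsupp.single_apply, card_filter]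
  rw [sum_comm]
  refine sum_congr rfl fun j _ => ?_
  simp

variable {m : ℕ}

def Refines (d : ℕ →₀ ℕ) (γ : Composition m) : Prop :=
  d.degree = m ∧ ∀ x ∈ compSet γ, x ∈ Set.range (prefixSum d)

lemma mem_compSet {γ : Composition m} {x : ℕ} :
    x ∈ compSet γ ↔ ∃ k, 1 ≤ k ∧ k ≤ γ.length - 1 ∧ γ.sizeUpTo k = x := by
  simp [compSet, Composition.sizeUpTo, and_assoc]

lemma pos_lt_of_mem_compSet {γ : Composition m} {x : ℕ} (hx : x ∈ compSet γ) :
    0 < x ∧ x < m := by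
  obtain ⟨k, hk1, hk2, rfl⟩ := mem_compSet.mp hx
  refine ⟨?_, ?_⟩
  · calc 0 = γ.sizeUpTo 0 := γ.sizeUpTo_zero.symm
      _ < γ.sizeUpTo 1 := γ.sizeUpTo_strict_mono (by omega)
      _ ≤ γ.sizeUpTo k := γ.monotone_sizeUpTo hk1
  · calc γ.sizeUpTo k < γ.sizeUpTo (k + 1) := γ.sizeUpTo_strict_mono (by omega)
      _ ≤ m := γ.sizeUpTo_le _

lemma refines_of_monotone (γ : Composition m) (i : ℕ → ℕ)
    (hmono : ∀ a b, a ≤ b → b < m → i a ≤ i b)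
    (hdesc : ∀ j, j + 1 < m → i j = i (j + 1) → j + 1 ∉ compSet γ) :
    Refines (∑ j ∈ range m, Finsupp.single (i j) 1) γ := by
  refine ⟨by simp, fun x hx => ⟨i x, ?_⟩⟩
  obtain ⟨hx0, hxm⟩ := pos_lt_of_mem_compSet hx
  have hlt : i (x - 1) < i x := by
    refine (hmono _ _ (by omega) hxm).lt_of_ne fun heq => ?_
    rw [← Nat.sub_add_cancel hx0] at hx heq hxm
    exact hdesc (x - 1) hxm heq hx
  rw [prefixSum_sum_single]
  convert card_range x using 2
  ext j
  simp only [mem_filter, mem_range]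
  constructor
  · rintro ⟨hj, hij⟩
    by_contra hjx
    exact (hmono x j (by omega) hj).not_gt hij
  · intro hj
    exact ⟨by omega, (hmono j (x - 1) (by omega) (by omega)).trans_lt hlt⟩

-- the `j`-th letter of the weakly increasing word with content `d`
noncomputable def sortedSeq (d : ℕ →₀ ℕ) (j : ℕ) : ℕ := sInf {v | j < prefixSum d (v + 1)}

lemma lt_prefixSum_sortedSeq {d : ℕ →₀ ℕ} {j : ℕ} (hj : j < d.degree) :
    j < prefixSum d (sortedSeq d j + 1) :=
  Nat.sInf_mem (s := {v | j < prefixSum d (v + 1)}) ⟨d.support.sup id,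
    show j < prefixSum d (d.support.sup id + 1) by
      rwa [prefixSum_eq_degree fun _ hx => lt_sup_support_succ hx]⟩

lemma sortedSeq_le {d : ℕ →₀ ℕ} {j v : ℕ} (h : j < prefixSum d (v + 1)) : sortedSeq d j ≤ v :=
  Nat.sInf_le h

lemma sortedSeq_eq_iff {d : ℕ →₀ ℕ} {j : ℕ} (hj : j < d.degree) (v : ℕ) :
    sortedSeq d j = v ↔ prefixSum d v ≤ j ∧ j < prefixSum d (v + 1) := by
  constructor
  · rintro rfl
    refine ⟨?_, lt_prefixSum_sortedSeq hj⟩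
    rcases Nat.eq_zero_or_pos (sortedSeq d j) with h0 | h0
    · simp [h0]
    · by_contra! h
      have := sortedSeq_le (v := sortedSeq d j - 1) (by rwa [Nat.sub_add_cancel h0])
      omega
  · rintro ⟨h1, h2⟩
    refine le_antisymm (sortedSeq_le h2) (not_lt.mp fun hlt => ?_)
    have := prefixSum_mono d (show sortedSeq d j + 1 ≤ v by omega)
    have := lt_prefixSum_sortedSeq hj
    omega

lemma sortedSeq_mono {d : ℕ →₀ ℕ} {a b : ℕ} (hab : a ≤ b) (hb : b < d.degree) :
    sortedSeq d a ≤ sortedSeq d b :=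
  sortedSeq_le (hab.trans_lt (lt_prefixSum_sortedSeq hb))

lemma sum_single_sortedSeq (d : ℕ →₀ ℕ) :
    ∑ j ∈ range d.degree, Finsupp.single (sortedSeq d j) 1 = d := by
  ext u
  simp only [Finsupp.finsetSum_apply, Finsupp.single_apply]
  rw [sum_boole, Nat.cast_id]
  have : {j ∈ range d.degree | sortedSeq d j = u} =
      Ico (prefixSum d u) (prefixSum d (u + 1)) := by
    ext j
    simp only [mem_filter, mem_range, mem_Ico]
    constructor
    · rintro ⟨hj, hju⟩
      exact (sortedSeq_eq_iff hj u).mp hju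
    · rintro ⟨h1, h2⟩
      have hj : j < d.degree := h2.trans_le (prefixSum_le_degree d _)
      exact ⟨hj, (sortedSeq_eq_iff hj u).mpr ⟨h1, h2⟩⟩
  rw [this, Nat.card_Ico, prefixSum_succ]
  omega

lemma exists_monotone_of_refines {γ : Composition m} {d : ℕ →₀ ℕ} (hd : Refines d γ) :
    ∃ i : ℕ → ℕ, (∀ a b, a ≤ b → b < m → i a ≤ i b) ∧
      (∀ j, j + 1 < m → i j = i (j + 1) → j + 1 ∉ compSet γ) ∧
      d = ∑ j ∈ range m, Finsupp.single (i j) 1 := by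
  obtain ⟨hdeg, hps⟩ := hd
  subst hdeg
  refine ⟨sortedSeq d, fun a b hab hb => sortedSeq_mono hab hb, ?_,
    (sum_single_sortedSeq d).symm⟩
  intro j hj heq hmem
  obtain ⟨v, hv⟩ := hps _ hmem
  have h1 := (sortedSeq_eq_iff (d := d) (j := j) (by omega) _).mp rfl
  have h2 := (sortedSeq_eq_iff (j := j + 1) hj _).mp heq.symm
  rcases le_or_gt v (sortedSeq d j) with hle | hlt
  · have := prefixSum_mono d hle
    omega
  · have := prefixSum_mono d (show sortedSeq d j + 1 ≤ v by omega)
    omega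

lemma coeff_Ffun (γ : Composition m) (d : ℕ →₀ ℕ) :
    MvPowerSeries.coeff d (Ffun γ) = if Refines d γ then 1 else 0 := by
  refine if_congr ⟨?_, exists_monotone_of_refines⟩ rfl rfl
  rintro ⟨i, hmono, hdesc, rfl⟩
  exact refines_of_monotone γ i hmono hdesc

lemma constantCoeff_Ffun (γ : Composition m) (hm : m ≠ 0) :
    MvPowerSeries.constantCoeff (Ffun γ) = 0 := by
  rw [← MvPowerSeries.coeff_zero_eq_constantCoeff_apply, coeff_Ffun, if_neg]
  rintro ⟨h, -⟩
  exact hm (by simpa using h.symm)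

/-! ### Compositions through their sets of partial sums -/

lemma sizeUpTo_lt_sizeUpTo (γ : Composition m) {a b : ℕ} (hab : a < b) (hb : b ≤ γ.length) :
    γ.sizeUpTo a < γ.sizeUpTo b :=
  (γ.sizeUpTo_strict_mono (by omega)).trans_le (γ.monotone_sizeUpTo hab)

lemma exists_sizeUpTo_eq_iff (γ : Composition m) (x : ℕ) :
    (∃ k, γ.sizeUpTo k = x) ↔ x = 0 ∨ x = m ∨ x ∈ compSet γ := by
  constructor
  · rintro ⟨k, rfl⟩
    by_cases hk0 : k = 0
    · simp [hk0]
    by_cases hkl : γ.length ≤ k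
    · exact .inr (.inl (γ.sizeUpTo_ofLength_le k hkl))
    · exact .inr (.inr (mem_compSet.mpr ⟨k, by omega, by omega, rfl⟩))
  · rintro (rfl | rfl | hx)
    · exact ⟨0, γ.sizeUpTo_zero⟩
    · exact ⟨γ.length, γ.sizeUpTo_length⟩
    · obtain ⟨k, -, -, hk⟩ := mem_compSet.mp hx
      exact ⟨k, hk⟩

lemma mem_boundaries_iff (γ : Composition m) (x : Fin (m + 1)) :
    x ∈ γ.boundaries ↔ ∃ k, γ.sizeUpTo k = x := by
  simp only [Composition.boundaries, mem_map, mem_univ, true_and]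
  constructor
  · rintro ⟨k, rfl⟩
    exact ⟨k, rfl⟩
  · rintro ⟨k, hk⟩
    refine ⟨⟨min k γ.length, by omega⟩, Fin.ext ?_⟩
    rcases le_total k γ.length with h | h
    · simp [Composition.boundary, min_eq_left h, hk]
    · simp [Composition.boundary, min_eq_right h, ← hk, γ.sizeUpTo_ofLength_le k h]

lemma mem_toFinsetC (γ : Composition m) (j : Fin (m - 1)) :
    j ∈ toFinsetC γ ↔ (j : ℕ) + 1 ∈ compSet γ := by
  simp only [toFinsetC, compositionAsSetEquiv, compositionEquiv, Equiv.coe_fn_mk,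
    Set.toFinset_ofPred, mem_filter, mem_univ, true_and,
    Composition.toCompositionAsSet_boundaries, mem_boundaries_iff, exists_sizeUpTo_eq_iff]
  have := j.isLt
  rw [add_comm]
  exact ⟨fun h => h.resolve_left (by omega) |>.resolve_left (by omega), .inr ∘ .inr⟩

lemma toFinsetC_ofFinsetC (S : Finset (Fin (m - 1))) : toFinsetC (ofFinsetC m S) = S := by
  simp [toFinsetC, ofFinsetC]

lemma eq_of_compSet_eq {γ δ : Composition m} (h : compSet γ = compSet δ) : γ = δ := by
  have : toFinsetC γ = toFinsetC δ := by
    ext j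
    rw [mem_toFinsetC, mem_toFinsetC, h]
  simpa [toFinsetC] using this

lemma blocks_eq_of_compSet_eq {n : ℕ} {γ : Composition m} {δ : Composition n} (hmn : m = n)
    (h : compSet γ = compSet δ) : γ.blocks = δ.blocks := by
  subst hmn
  rw [eq_of_compSet_eq h]

lemma mem_compSet_ofFinsetC (S : Finset (Fin (m - 1))) (x : ℕ) :
    x ∈ compSet (ofFinsetC m S) ↔ ∃ j ∈ S, (j : ℕ) + 1 = x := by
  constructor
  · intro hx
    obtain ⟨hx0, hxm⟩ := pos_lt_of_mem_compSet hx
    refine ⟨⟨x - 1, by omega⟩, ?_, by simp; omega⟩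
    rw [← toFinsetC_ofFinsetC S, mem_toFinsetC]
    simpa [Nat.sub_add_cancel hx0] using hx
  · rintro ⟨j, hj, rfl⟩
    rwa [← mem_toFinsetC, toFinsetC_ofFinsetC]

lemma compSet_ofFinsetC_empty (m : ℕ) : compSet (ofFinsetC m ∅) = ∅ := by
  ext x
  simp [mem_compSet_ofFinsetC]

lemma compSet_ones (m : ℕ) : compSet (Composition.ones m) = Icc 1 (m - 1) := by
  ext x
  simp only [mem_compSet, Composition.ones_length, Composition.ones_sizeUpTo, mem_Icc]
  constructor
  · rintro ⟨k, h1, h2, rfl⟩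
    omega
  · rintro ⟨h1, h2⟩
    exact ⟨x, h1, h2, by omega⟩

lemma card_compSet (γ : Composition m) : #(compSet γ) = γ.length - 1 := by
  rw [compSet, card_image_of_injOn, Nat.card_Icc, Nat.add_sub_cancel]
  intro a ha b hb hab
  simp only [coe_Icc, Set.mem_Icc] at ha hb
  by_contra hne
  rcases Nat.lt_or_gt_of_ne hne with h | h
  · exact (sizeUpTo_lt_sizeUpTo γ h (by omega)).ne hab
  · exact (sizeUpTo_lt_sizeUpTo γ h (by omega)).ne' hab

def truncate (γ : Composition m) (s : ℕ) : Composition s :=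
  ofFinsetC s {j | (j : ℕ) + 1 ∈ compSet γ}

lemma mem_compSet_truncate (γ : Composition m) (s x : ℕ) :
    x ∈ compSet (truncate γ s) ↔ x ∈ compSet γ ∧ x < s := by
  rw [truncate, mem_compSet_ofFinsetC]
  constructor
  · rintro ⟨j, hj, rfl⟩
    exact ⟨(mem_filter.mp hj).2, by omega⟩
  · rintro ⟨hx, hxs⟩
    have := (pos_lt_of_mem_compSet hx).1
    exact ⟨⟨x - 1, by omega⟩, by simpa [Nat.sub_add_cancel this] using hx, by simp; omega⟩

/-! ### Skewing by `h_r` -/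

lemma prefixSum_add_single {e : ℕ →₀ ℕ} {L : ℕ} (he : ∀ x ∈ e.support, x < L) (r v : ℕ) :
    prefixSum (e + Finsupp.single L r) v = if L < v then e.degree + r else prefixSum e v := by
  have hsingle : prefixSum (Finsupp.single L r) v = if L < v then r else 0 := by
    simp [prefixSum, Finsupp.single_apply]
  have hadd : prefixSum (e + Finsupp.single L r) v =
      prefixSum e v + prefixSum (Finsupp.single L r) v :=
    sum_add_distrib
  split_ifs with hLv
  · rw [hadd, hsingle, if_pos hLv, prefixSum_eq_degree fun x hx => (he x hx).trans hLv]
  · rw [hadd, hsingle, if_neg hLv, add_zero]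

lemma mem_range_prefixSum_add_single {e : ℕ →₀ ℕ} {L : ℕ} (he : ∀ x ∈ e.support, x < L)
    (r x : ℕ) :
    x ∈ Set.range (prefixSum (e + Finsupp.single L r)) ↔
      x ∈ Set.range (prefixSum e) ∨ x = e.degree + r := by
  simp only [Set.mem_range, prefixSum_add_single he]
  constructor
  · rintro ⟨v, hv⟩
    split_ifs at hv
    · exact .inr hv.symm
    · exact .inl ⟨v, hv⟩
  · rintro (⟨v, rfl⟩ | rfl)
    · by_cases hLv : L < v
      · refine ⟨L, ?_⟩
        rw [if_neg (lt_irrefl L), prefixSum_eq_degree he,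
          prefixSum_eq_degree fun x hx => (he x hx).trans hLv]
      · exact ⟨v, if_neg hLv⟩
    · exact ⟨L + 1, if_pos L.lt_succ_self⟩

lemma refines_add_single_iff {γ : Composition m} {e : ℕ →₀ ℕ} {L : ℕ}
    (he : ∀ x ∈ e.support, x < L) (r : ℕ) :
    Refines (e + Finsupp.single L r) γ ↔
      (r ≤ m ∧ ∀ x ∈ compSet γ, x ≤ m - r) ∧ Refines e (truncate γ (m - r)) := by
  simp only [Refines, map_add, Finsupp.degree_single, mem_range_prefixSum_add_single he,
    mem_compSet_truncate]
  have hLe : prefixSum e L = e.degree := prefixSum_eq_degree he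
  constructor
  · rintro ⟨hdeg, hx⟩
    have hmem : ∀ x ∈ compSet γ, x ∈ Set.range (prefixSum e) := fun x hxγ =>
      (hx x hxγ).resolve_right (by have := (pos_lt_of_mem_compSet hxγ).2; omega)
    refine ⟨⟨by omega, fun x hxγ => ?_⟩, by omega, fun x hxγ => hmem x hxγ.1⟩
    obtain ⟨v, rfl⟩ := hmem x hxγ
    have := prefixSum_le_degree e v
    omega
  · rintro ⟨⟨hrm, hle⟩, hdeg, hx⟩
    refine ⟨by omega, fun x hxγ => .inl ?_⟩
    rcases (hle x hxγ).lt_or_eq with hlt | heq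
    · exact hx x ⟨hxγ, hlt⟩
    · exact ⟨L, by omega⟩

/-- `G'` is `h_r^⊥ G`: the coefficients of `G` in which the last variable carries the
exponent `r`, with that variable removed. -/
def IsSkew (r : ℕ) (G G' : MvPowerSeries ℕ ℚ) : Prop :=
  ∀ (d : ℕ →₀ ℕ) (L : ℕ), (∀ x ∈ d.support, x < L) →
    MvPowerSeries.coeff (d + Finsupp.single L r) G = MvPowerSeries.coeff d G'

lemma isSkew_Ffun (γ : Composition m) (r : ℕ) :
    IsSkew r (Ffun γ)
      (if r ≤ m ∧ ∀ x ∈ compSet γ, x ≤ m - r then Ffun (truncate γ (m - r)) else 0) := by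
  intro e L he
  rw [coeff_Ffun, refines_add_single_iff he]
  split_ifs <;> simp_all [coeff_Ffun]

lemma sum_antidiagonal_add_single {M : Type*} [AddCommMonoid M] {D : ℕ →₀ ℕ} {L : ℕ}
    (hD : D L = 0) (k : ℕ) (f : (ℕ →₀ ℕ) × (ℕ →₀ ℕ) → M) :
    ∑ p ∈ antidiagonal (D + Finsupp.single L k), f p =
      ∑ t ∈ range (k + 1), ∑ q ∈ antidiagonal D,
        f (q.1 + Finsupp.single L t, q.2 + Finsupp.single L (k - t)) := by
  rw [← sum_product']
  have hq : ∀ q ∈ antidiagonal D, q.1 L = 0 ∧ q.2 L = 0 := fun q hq => by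
    have := congr($(HasAntidiagonal.mem_antidiagonal.mp hq) L)
    simp only [Finsupp.add_apply, hD] at this
    omega
  have hp : ∀ p ∈ antidiagonal (D + Finsupp.single L k), p.1 L + p.2 L = k := fun p hp => by
    simpa [hD] using congr($(HasAntidiagonal.mem_antidiagonal.mp hp) L)
  have erase_add_single : ∀ (g : ℕ →₀ ℕ) t, g L = 0 → (g + Finsupp.single L t).erase L = g :=
    fun g t hg => by
      rw [Finsupp.erase_add, Finsupp.erase_single, add_zero,
        Finsupp.erase_of_notMem_support (by simpa using hg)]
  symm
  refine sum_nbij'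
    (fun tq => (tq.2.1 + Finsupp.single L tq.1, tq.2.2 + Finsupp.single L (k - tq.1)))
    (fun p => (p.1 L, p.1.erase L, p.2.erase L)) ?_ ?_ ?_ ?_ (fun _ _ => rfl)
  · rintro ⟨t, q⟩ htq
    simp only [mem_product, mem_range, HasAntidiagonal.mem_antidiagonal] at htq ⊢
    rw [add_add_add_comm, htq.2, ← Finsupp.single_add, Nat.add_sub_cancel' (by omega)]
  · rintro p hp'
    have hsum := HasAntidiagonal.mem_antidiagonal.mp hp'
    simp only [mem_product, mem_range, HasAntidiagonal.mem_antidiagonal]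
    refine ⟨by have := hp p hp'; omega, ?_⟩
    rw [← Finsupp.erase_add, hsum, erase_add_single _ _ hD]
  · rintro ⟨t, q⟩ htq
    obtain ⟨h1, h2⟩ := hq q (mem_product.mp htq).2
    simp only [Finsupp.add_apply, h1, Finsupp.single_eq_same, zero_add, erase_add_single _ _ h1,
      erase_add_single _ _ h2]
  · rintro p hp'
    have := hp p hp'
    simp only [Finsupp.erase_add_single]
    rw [show k - p.1 L = p.2 L by omega, Finsupp.erase_add_single]

lemma IsSkew.mul {F G : MvPowerSeries ℕ ℚ} {k : ℕ} {F' G' : ℕ → MvPowerSeries ℕ ℚ}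
    (hF : ∀ t, IsSkew t F (F' t)) (hG : ∀ t, IsSkew t G (G' t)) :
    IsSkew k (F * G) (∑ t ∈ range (k + 1), F' t * G' (k - t)) := by
  intro d L hd
  have hdL : d L = 0 := Finsupp.notMem_support_iff.mp fun h => (hd L h).false
  have hsupp : ∀ q ∈ antidiagonal d, (∀ x ∈ q.1.support, x < L) ∧ ∀ x ∈ q.2.support, x < L :=
    fun q hq => by
      have := HasAntidiagonal.mem_antidiagonal.mp hq
      refine ⟨fun x hx => hd x ?_, fun x hx => hd x ?_⟩ <;>
        simp only [Finsupp.mem_support_iff, ← this, Finsupp.add_apply] at hx ⊢ <;> omega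
  rw [MvPowerSeries.coeff_mul, sum_antidiagonal_add_single hdL, map_sum]
  refine sum_congr rfl fun t _ => ?_
  rw [MvPowerSeries.coeff_mul]
  exact sum_congr rfl fun q hq => by rw [hF t _ _ (hsupp q hq).1, hG _ _ _ (hsupp q hq).2]

lemma Frow_zero : Frow 0 = 1 := dif_neg (lt_irrefl 0)

lemma Frow_eq_Ffun (i : ℕ) : Frow i = Ffun (ofFinsetC i ∅) := by
  rcases Nat.eq_zero_or_pos i with rfl | hi
  · ext d
    rw [Frow_zero, coeff_Ffun, MvPowerSeries.coeff_one, Refines, compSet_ofFinsetC_empty]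
    simp [Finsupp.degree_eq_zero_iff]
  · rw [Frow, dif_pos hi]
    congr 1
    refine eq_of_compSet_eq ?_
    rw [compSet_ofFinsetC_empty]
    simp [compSet, Composition.single_length]

lemma Fcol_zero : Fcol 0 = 1 := by
  rw [Fcol, eq_of_compSet_eq (γ := Composition.ones 0) (δ := ofFinsetC 0 ∅)
    (by rw [compSet_ones, compSet_ofFinsetC_empty]; rfl), ← Frow_eq_Ffun, Frow_zero]

lemma isSkew_Frow (i t : ℕ) : IsSkew t (Frow i) (if t ≤ i then Frow (i - t) else 0) := by
  rw [Frow_eq_Ffun]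
  convert isSkew_Ffun (ofFinsetC i ∅) t using 1
  simp only [compSet_ofFinsetC_empty, notMem_empty, IsEmpty.forall_iff, implies_true, and_true]
  congr 1
  rw [Frow_eq_Ffun]
  congr 1
  refine eq_of_compSet_eq ?_
  ext x
  simp [mem_compSet_truncate, compSet_ofFinsetC_empty]

lemma isSkew_Fcol (i t : ℕ) :
    IsSkew t (Fcol i) (if t ≤ 1 ∧ t ≤ i then Fcol (i - t) else 0) := by
  rw [Fcol]
  convert isSkew_Ffun (Composition.ones i) t using 1
  simp only [compSet_ones, mem_Icc]
  refine if_congr ⟨fun h => ⟨h.2, fun x hx => by omega⟩, fun ⟨hti, h⟩ => ⟨?_, hti⟩⟩ ?_ rfl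
  · rcases Nat.lt_or_ge i 2 with hi | hi
    · omega
    · have := h (i - 1) ⟨by omega, le_rfl⟩
      omega
  · rw [Fcol]
    congr 1
    refine eq_of_compSet_eq ?_
    ext x
    simp only [compSet_ones, mem_compSet_truncate, mem_Icc]
    omega

/-! ### The pairing -/

noncomputable def pairing : NSymH →ₗ[ℚ] MvPowerSeries ℕ ℚ →ₗ[ℚ] ℚ :=
  (Finsupp.lsum ℚ fun w => LinearMap.smulRight LinearMap.id
    (MvPowerSeries.coeff (monomialOfW w))) ∘ₗ (MonoidAlgebra.coeffLinearEquiv ℚ).toLinearMap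

lemma pairing_apply (a : NSymH) (G : MvPowerSeries ℕ ℚ) : pairing a G = pairPF a G := by
  simp [pairing, pairPF, Finsupp.sum, LinearMap.sum_apply]

lemma pairPF_single (w : FreeMonoid ℕ+) (c : ℚ) (G : MvPowerSeries ℕ ℚ) :
    pairPF (MonoidAlgebra.single w c) G = c * MvPowerSeries.coeff (monomialOfW w) G := by
  simp [← pairing_apply, pairing]

lemma pairPF_one (G : MvPowerSeries ℕ ℚ) : pairPF 1 G = MvPowerSeries.coeff 0 G := by
  rw [MonoidAlgebra.one_def, pairPF_single, one_mul]
  rfl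

def parts (w : FreeMonoid ℕ+) : List ℕ := w.toList.map (↑)

lemma parts_injective : Function.Injective parts :=
  (List.map_injective_iff.mpr PNat.coe_injective).comp FreeMonoid.toList.injective

def wordComposition (w : FreeMonoid ℕ+) : Composition (parts w).sum :=
  ⟨parts w, fun hi => by obtain ⟨p, -, rfl⟩ := List.mem_map.mp hi; exact p.pos, rfl⟩

lemma monomialOfW_eq (w : FreeMonoid ℕ+) : monomialOfW w = (parts w).toFinsupp := by
  ext v
  rw [List.toFinsupp_apply, monomialOfW, Finsupp.finsetSum_apply]
  rcases lt_or_ge v (FreeMonoid.toList w).length with hv | hv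
  · rw [sum_eq_single ⟨v, hv⟩ (fun j _ hj => Finsupp.single_eq_of_ne fun h => hj (Fin.ext h.symm))
      (by simp)]
    simp [parts, hv]
  · rw [sum_eq_zero fun j _ => Finsupp.single_eq_of_ne (by omega),
      List.getD_eq_default _ _ (by simpa [parts] using hv)]

lemma prefixSum_toFinsupp (l : List ℕ) (v : ℕ) : prefixSum l.toFinsupp v = (l.take v).sum := by
  induction v with
  | zero => simp
  | succ v ih =>
    rw [prefixSum_succ, ih, List.toFinsupp_apply]
    rcases Nat.lt_or_ge v l.length with hv | hv
    · rw [List.sum_take_succ _ _ hv, List.getD_eq_getElem _ _ hv]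
    · rw [List.getD_eq_default _ _ hv, List.take_of_length_le hv,
        List.take_of_length_le (by omega), add_zero]

lemma lt_length_of_mem_support (l : List ℕ) {x : ℕ} (hx : x ∈ l.toFinsupp.support) :
    x < l.length := by
  by_contra! h
  exact Finsupp.mem_support_iff.mp hx (List.toFinsupp_apply_le _ _ h)

lemma degree_toFinsupp (l : List ℕ) : l.toFinsupp.degree = l.sum := by
  rw [← prefixSum_eq_degree fun _ => lt_length_of_mem_support l, prefixSum_toFinsupp,
    List.take_length]

-- the word of `hW [k]`; it is empty for `k = 0`
noncomputable def letter (k : ℕ) : FreeMonoid ℕ+ :=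
  FreeMonoid.ofList ([k].filterMap fun m => if h : 0 < m then some (⟨m, h⟩ : ℕ+) else none)

lemma hW_singleton (k : ℕ) : hW [k] = MonoidAlgebra.single (letter k) 1 := rfl

lemma monomialOfW_mul_letter (w : FreeMonoid ℕ+) (k : ℕ) :
    monomialOfW (w * letter k) = monomialOfW w + Finsupp.single (parts w).length k := by
  rcases k with _ | k
  · simp [letter]
  · have : parts (w * letter (k + 1)) = parts w ++ [k + 1] := by
      simp only [parts, letter, FreeMonoid.toList_mul, FreeMonoid.toList_ofList, List.map_append]
      rfl
    ext v
    rw [monomialOfW_eq, monomialOfW_eq, List.toFinsupp_apply, this,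
      ← List.toFinsupp_apply, List.toFinsupp_concat_eq_toFinsupp_add_single]

lemma pairPF_mul_hW {k : ℕ} {G G' : MvPowerSeries ℕ ℚ} (hG : IsSkew k G G') (a : NSymH) :
    pairPF (a * hW [k]) G = pairPF a G' := by
  induction a using MonoidAlgebra.induction_linear with
  | zero => simp [← pairing_apply]
  | add a b ha hb =>
    simp only [add_mul, ← pairing_apply, map_add, LinearMap.add_apply] at *
    rw [ha, hb]
  | single w c =>
    rw [hW_singleton, MonoidAlgebra.single_mul_single, mul_one, pairPF_single, pairPF_single,
      monomialOfW_mul_letter, hG _ _ fun x hx => ?_]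
    rw [monomialOfW_eq] at hx
    exact lt_length_of_mem_support _ hx

lemma refines_monomialOfW_iff (γ : Composition m) (w : FreeMonoid ℕ+) :
    Refines (monomialOfW w) γ ↔
      (parts w).sum = m ∧ compSet γ ⊆ compSet (wordComposition w) := by
  have hps : ∀ x, x ∈ Set.range (prefixSum (monomialOfW w)) ↔
      x = 0 ∨ x = (parts w).sum ∨ x ∈ compSet (wordComposition w) := fun x => by
    rw [← exists_sizeUpTo_eq_iff, monomialOfW_eq]
    simp [prefixSum_toFinsupp, Composition.sizeUpTo, wordComposition]
  rw [Refines, monomialOfW_eq, degree_toFinsupp, ← monomialOfW_eq]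
  refine and_congr_right fun hm =>
    ⟨fun h x hx => ?_, fun h x hx => (hps x).mpr (.inr (.inr (h hx)))⟩
  have := pos_lt_of_mem_compSet hx
  exact ((hps x).mp (h x hx)).resolve_left (by omega) |>.resolve_left (by omega)

/-- For `w'` of maximal length in the support, `F` of its composition pairs trivially with every
other word `w` of the support: `w` would refine it, with no more parts, hence be equal to it. -/
lemma coeff_monomialOfW_Ffun_wordComposition {a : NSymH} {w w' : FreeMonoid ℕ+}
    (hw : w ∈ a.coeff.support)
    (hmax : ∀ w ∈ a.coeff.support, (parts w).length ≤ (parts w').length) :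
    MvPowerSeries.coeff (monomialOfW w) (Ffun (wordComposition w')) =
      if w = w' then 1 else 0 := by
  rw [coeff_Ffun]
  by_cases hww : w = w'
  · subst hww
    simp [refines_monomialOfW_iff]
  · rw [if_neg hww, if_neg]
    rw [refines_monomialOfW_iff]
    rintro ⟨hsum, hsub⟩
    have heq := eq_of_subset_of_card_le hsub (by
      simp only [card_compSet]
      exact Nat.sub_le_sub_right (hmax w hw) 1)
    exact hww (parts_injective (blocks_eq_of_compSet_eq hsum heq.symm))

lemma eq_zero_of_pairPF_Ffun (a : NSymH)
    (h : ∀ (m : ℕ) (γ : Composition m), pairPF a (Ffun γ) = 0) : a = 0 := by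
  by_contra ha
  have hsupp : a.coeff.support.Nonempty := by
    simpa [Finsupp.support_nonempty_iff] using ha
  obtain ⟨w', hw', hmax⟩ := a.coeff.support.exists_max_image (fun w => (parts w).length) hsupp
  have := h _ (wordComposition w')
  rw [pairPF, Finsupp.sum, sum_eq_single_of_mem w' hw' fun w hw hne => by
    rw [coeff_monomialOfW_Ffun_wordComposition hw hmax, if_neg hne, mul_zero],
    coeff_monomialOfW_Ffun_wordComposition hw' hmax, if_pos rfl, mul_one] at this
  exact Finsupp.mem_support_iff.mp hw' this

lemma eq_of_pairPF_Ffun_eq {a b : NSymH}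
    (h : ∀ (m : ℕ) (γ : Composition m), pairPF a (Ffun γ) = pairPF b (Ffun γ)) : a = b :=
  sub_eq_zero.mp <| eq_zero_of_pairPF_Ffun _ fun m γ => by
    rw [← pairing_apply, map_sub, LinearMap.sub_apply, pairing_apply, pairing_apply, h, sub_self]

/-! ### Adjoints of multiplication by `F_{(i)}` and `F_{(1^i)}` on `h_k` -/

def IsAdjointMul (F : MvPowerSeries ℕ ℚ) (D : NSymH →ₗ[ℚ] NSymH) : Prop :=
  ∀ (a : NSymH) (m : ℕ) (γ : Composition m), pairPF (D a) (Ffun γ) = pairPF a (F * Ffun γ)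

lemma IsAdjointMul.pairPF_ite {F : MvPowerSeries ℕ ℚ} {D : NSymH →ₗ[ℚ] NSymH}
    (hD : IsAdjointMul F D) (a : NSymH) (γ : Composition m) (p : Prop) [Decidable p] :
    pairPF (D a) (if p then Ffun γ else 0) = pairPF a (F * if p then Ffun γ else 0) := by
  split_ifs
  · exact hD a m γ
  · simp [← pairing_apply]

lemma IsAdjointMul.apply_eq_self {D : NSymH →ₗ[ℚ] NSymH} (hD : IsAdjointMul 1 D) (a : NSymH) :
    D a = a :=
  eq_of_pairPF_Ffun_eq fun m γ => by rw [hD, one_mul]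

lemma IsAdjointMul.map_one {F : MvPowerSeries ℕ ℚ} {D : NSymH →ₗ[ℚ] NSymH}
    (hD : IsAdjointMul F D) (hF : MvPowerSeries.constantCoeff F = 0) : D 1 = 0 :=
  eq_zero_of_pairPF_Ffun _ fun m γ => by
    rw [hD, pairPF_one, MvPowerSeries.coeff_zero_eq_constantCoeff_apply, map_mul, hF, zero_mul]

lemma IsAdjointMul.map_mul_hW {F : ℕ → MvPowerSeries ℕ ℚ} {D : ℕ → NSymH →ₗ[ℚ] NSymH}
    (hD : ∀ i, IsAdjointMul (F i) (D i)) (c : ℕ → ℕ → ℚ)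
    (hF : ∀ i t, IsSkew t (F i) (c i t • F (i - t))) (i k : ℕ) (f : NSymH) :
    D i (f * hW [k]) = ∑ t ∈ range (k + 1), c i t • (D (i - t) f * hW [k - t]) := by
  refine eq_of_pairPF_Ffun_eq fun m γ => ?_
  rw [hD, pairPF_mul_hW (IsSkew.mul (hF i) (isSkew_Ffun γ))]
  simp only [← pairing_apply, map_sum, map_smul, LinearMap.sum_apply,
    LinearMap.smul_apply, smul_mul_assoc]
  refine sum_congr rfl fun t _ => ?_
  rw [pairing_apply, pairing_apply, pairPF_mul_hW (isSkew_Ffun γ _), (hD _).pairPF_ite]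

lemma sumRule_of_isAdjointMul_Frow {U : ℕ → NSymH →ₗ[ℚ] NSymH}
    (hU : ∀ k, IsAdjointMul (Frow k) (U k)) : SumRule U fun k => hW [k] := by
  intro i k f
  rw [IsAdjointMul.map_mul_hW hU (fun i t => if t ≤ i then 1 else 0)
    (fun i t => by simpa [ite_smul] using isSkew_Frow i t)]
  simp only [ite_smul, one_smul, zero_smul]
  rw [← sum_filter]
  congr 1
  ext t
  simp only [mem_filter, mem_range]
  omega

lemma twoTermRule_of_isAdjointMul_Fcol {V : ℕ → NSymH →ₗ[ℚ] NSymH}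
    (hV : ∀ k, IsAdjointMul (Fcol k) (V k)) : TwoTermRule V fun k => hW [k] := by
  intro i k f
  rw [IsAdjointMul.map_mul_hW hV (fun i t => if t ≤ 1 ∧ t ≤ i then 1 else 0)
    (fun i t => by simpa [ite_smul] using isSkew_Fcol i t), sum_range_succ', sum_range_succ',
    sum_eq_zero fun t _ => by simp]
  simp [add_comm]

/-! ### The recursion for `e_n` -/

lemma hW_zero : hW [0] = 1 := by
  simp [hW, MonoidAlgebra.one_def]

lemma hW_append (l l' : List ℕ) : hW (l ++ l') = hW l * hW l' := by
  rw [hW, hW, hW, MonoidAlgebra.single_mul_single, one_mul, List.filterMap_append,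
    FreeMonoid.ofList_append]

lemma eN_zero : eN 0 = 1 := by
  rw [eN, Fintype.sum_eq_single (Composition.ones 0) fun c hc =>
    absurd (Composition.eq_ones_iff_length.mpr (by have := c.length_le; omega)) hc]
  simp [hW, MonoidAlgebra.one_def]

lemma blocks_eq_headI_cons {n : ℕ} (α : Composition (n + 1)) :
    α.blocks = α.blocks.headI :: α.blocks.tail := by
  cases h : α.blocks with
  | nil => simpa [h] using α.blocks_sum
  | cons b t => rfl

lemma one_le_headI {n : ℕ} (α : Composition (n + 1)) : 1 ≤ α.blocks.headI :=
  α.one_le_blocks (by rw [blocks_eq_headI_cons]; exact List.mem_cons_self)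

lemma headI_le {n : ℕ} (α : Composition (n + 1)) : α.blocks.headI ≤ n + 1 :=
  (List.headI_le_sum α.blocks).trans_eq α.blocks_sum

def tailComposition {n : ℕ} (α : Composition (n + 1)) :
    Composition (n - (α.blocks.headI - 1)) :=
  ⟨α.blocks.tail, fun h => α.blocks_pos (List.mem_of_mem_tail h), by
    have := List.headI_add_tail_sum α.blocks
    have := one_le_headI α
    rw [α.blocks_sum] at *
    omega⟩

def consComposition {n a : ℕ} (ha : a < n + 1) (β : Composition (n - a)) :
    Composition (n + 1) :=
  ⟨(a + 1) :: β.blocks, by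
    rintro i (_ | ⟨_, hi⟩)
    · omega
    · exact β.blocks_pos hi, by
    rw [List.sum_cons, β.blocks_sum]
    omega⟩

lemma eN_succ (n : ℕ) :
    eN (n + 1) = ∑ a ∈ range (n + 1), (-1 : ℚ) ^ a • (hW [a + 1] * eN (n - a)) := by
  simp only [eN, mul_sum, smul_sum, mul_smul_comm, smul_smul, ← pow_add, ← hW_append,
    List.singleton_append]
  rw [sum_sigma']
  refine sum_bij' (fun α _ => ⟨α.blocks.headI - 1, tailComposition α⟩)
    (fun x hx => consComposition (mem_range.mp (mem_sigma.mp hx).1) x.2) ?_ ?_ ?_ ?_ ?_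
  · intro α _
    simp only [mem_sigma, mem_range, mem_univ, and_true]
    have := headI_le α
    omega
  · exact fun _ _ => mem_univ _
  · intro α _
    apply Composition.ext
    simp only [consComposition, tailComposition]
    rw [Nat.sub_add_cancel (one_le_headI α), ← blocks_eq_headI_cons]
  · exact fun _ _ => rfl
  · intro α _
    have hblocks : (α.blocks.headI - 1 + 1) :: (tailComposition α).blocks = α.blocks := by
      rw [Nat.sub_add_cancel (one_le_headI α)]
      exact (blocks_eq_headI_cons α).symm
    have hlen : α.length = (tailComposition α).length + 1 := by
      simpa using congrArg List.length hblocks.symm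
    have := (tailComposition α).length_le
    have := one_le_headI α
    have := headI_le α
    dsimp only
    rw [hblocks]
    congr 2
    omega

lemma isElementaryOf_hW_eN : IsElementaryOf (fun k => hW [k]) eN where
  h_zero := hW_zero
  e_zero := eN_zero
  e_succ n := by
    rw [eN_succ, Finset.Nat.sum_antidiagonal_eq_sum_range_succ_mk]
    refine sum_congr rfl fun a _ => ?_
    rw [← Int.cast_smul_eq_zsmul ℚ]
    simp

end NSymPerp

open NSymPerp

/-- For `i, j > 0` and `f ∈ NSym`:
`F^⊥_{(i)}(f·e_j) = F^⊥_{(i)}(f)·e_j + F^⊥_{(i−1)}(f)·e_{j−1}` and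
`F^⊥_{(1^i)}(f·e_j) = ∑_{k=0}^{min(i,j)} F^⊥_{(1^{i−k})}(f)·e_{j−k}`; in particular
`F^⊥_{(1^i)}(e_j) = e_{j−i}` if `i ≤ j` and `0` if `i > j`, while `F^⊥_{(i)}(e_j)` is
`e_{j−1}` if `i = 1` and `0` if `i > 1`.  Here `U k` (resp. `V k`) denotes the adjoint
of multiplication by `F_{(k)}` (resp. `F_{(1^k)}`). -/
theorem perp_e_rules (i j : ℕ) (hi : 0 < i) (hj : 0 < j)
    (U V : ℕ → NSymH →ₗ[ℚ] NSymH)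
    (hU : ∀ (k : ℕ) (a : NSymH) (m : ℕ) (γ : Composition m),
      pairPF (U k a) (Ffun γ) = pairPF a (Frow k * Ffun γ))
    (hV : ∀ (k : ℕ) (a : NSymH) (m : ℕ) (γ : Composition m),
      pairPF (V k a) (Ffun γ) = pairPF a (Fcol k * Ffun γ))
    (f : NSymH) :
    (U i (f * eN j) = U i f * eN j + U (i - 1) f * eN (j - 1)) ∧
    (V i (f * eN j) = ∑ k ∈ Finset.range (min i j + 1), V (i - k) f * eN (j - k)) ∧
    (i ≤ j → V i (eN j) = eN (j - i)) ∧ (j < i → V i (eN j) = 0) ∧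
    (i = 1 → U i (eN j) = eN (j - 1)) ∧ (1 < i → U i (eN j) = 0) := by
  have hUadj : ∀ k, IsAdjointMul (Frow k) (U k) := hU
  have hVadj : ∀ k, IsAdjointMul (Fcol k) (V k) := hV
  have hU0 : ∀ a, U 0 a = a := IsAdjointMul.apply_eq_self (Frow_zero ▸ hUadj 0)
  have hV0 : ∀ a, V 0 a = a := IsAdjointMul.apply_eq_self (Fcol_zero ▸ hVadj 0)
  have hU1 : ∀ k, U (k + 1) 1 = 0 := fun k =>
    (hUadj _).map_one (Frow_eq_Ffun _ ▸ constantCoeff_Ffun _ k.succ_ne_zero)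
  have hV1 : ∀ k, V (k + 1) 1 = 0 := fun k =>
    (hVadj _).map_one (constantCoeff_Ffun _ k.succ_ne_zero)
  have hUe : TwoTermRule U eN :=
    isElementaryOf_hW_eN.twoTermRule (sumRule_of_isAdjointMul_Frow hUadj).shiftRule
  have hVe : SumRule V eN :=
    (isElementaryOf_hW_eN.shiftRule (twoTermRule_of_isAdjointMul_Fcol hVadj)).sumRule hV0 eN_zero
  obtain ⟨i, rfl⟩ := Nat.exists_eq_add_one_of_ne_zero hi.ne'
  obtain ⟨j, rfl⟩ := Nat.exists_eq_add_one_of_ne_zero hj.ne'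
  refine ⟨by simpa using hUe i j f, hVe _ _ f, fun h => ?_, fun h => ?_, fun h => ?_, fun h => ?_⟩
  · rw [hVe.map_eq hV0 hV1, if_pos h]
  · rw [hVe.map_eq hV0 hV1, if_neg (by omega)]
  · rw [hUe.map_eq hU0 hU1, if_pos (by omega), Nat.add_sub_cancel]
  · rw [hUe.map_eq hU0 hU1, if_neg (by omega)]
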